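/- arXiv:1906.02556 — 2 statements merged into one kernel-verified Lean document; each statement's English description precedes it below -/
import Mathlib

section
/- Let f(u,v)=c(u)+(v²/2)ξ̂(u,v), where ξ̂ is a C^r map into ℝ³ such that c'(u) and ξ̂(u,0) are linearly independent for each u∈J. Then the first fundamental form of f is a C^r Kossowski metric all of whose singular points are of type I. Concretely: EG−F²=λ², where λ=vλ₀ with λ₀(u,v)=|(c'(u)+(v²/2)ξ̂_u)×(ξ̂+(v/2)ξ̂_v)| satisfying λ₀(u,0)≠0 (so λ_v(u,0)≠0); the K-admissibility conditions E_v=2F_u and G_u=G_v=0 hold at every point (u,0); and at each (u,0) the null direction ∂_v is linearly independent of the singular direction ∂_u. -/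
noncomputable section

open Real Set Filter Topology MeasureTheory Asymptotics

/-- Vectors in Euclidean 3-space. -/
abbrev V3 : Type := Fin 3 → ℝ

/-- Euclidean inner product on `V3`. -/
def dot3 (x y : V3) : ℝ := x 0 * y 0 + x 1 * y 1 + x 2 * y 2

/-- Cross product on `V3`. -/
def cross3 (x y : V3) : V3 :=
  ![x 1 * y 2 - x 2 * y 1, x 2 * y 0 - x 0 * y 2, x 0 * y 1 - x 1 * y 0]

/-- Partial derivative in the first variable. -/
def pd1 {E : Type*} [NormedAddCommGroup E] [NormedSpace ℝ E]
    (f : ℝ × ℝ → E) (p : ℝ × ℝ) : E := deriv (fun u => f (u, p.2)) p.1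

/-- Partial derivative in the second variable. -/
def pd2 {E : Type*} [NormedAddCommGroup E] [NormedSpace ℝ E]
    (f : ℝ × ℝ → E) (p : ℝ × ℝ) : E := deriv (fun v => f (p.1, v)) p.2

/-- Coefficient `E = f_u ⬝ f_u` of the first fundamental form. -/
def Ecoef (f : ℝ × ℝ → V3) (p : ℝ × ℝ) : ℝ := dot3 (pd1 f p) (pd1 f p)

/-- Coefficient `F = f_u ⬝ f_v` of the first fundamental form. -/
def Fcoef (f : ℝ × ℝ → V3) (p : ℝ × ℝ) : ℝ := dot3 (pd1 f p) (pd2 f p)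

/-- Coefficient `G = f_v ⬝ f_v` of the first fundamental form. -/
def Gcoef (f : ℝ × ℝ → V3) (p : ℝ × ℝ) : ℝ := dot3 (pd2 f p) (pd2 f p)

/-- The segment `J × {0} = [-l,l] × {0}` in the `uv`-plane. -/
def JSet (l : ℝ) : Set (ℝ × ℝ) := (Icc (-l) l) ×ˢ ({0} : Set ℝ)

/-- `φ` is a (smooth) diffeomorphism from `U` onto `V`. -/
def LocalDiffeoOn (φ : ℝ × ℝ → ℝ × ℝ) (U V : Set (ℝ × ℝ)) : Prop :=
  IsOpen U ∧ IsOpen V ∧ ContDiffOn ℝ (⊤ : ℕ∞) φ U ∧ Set.BijOn φ U V ∧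
    ∃ ψ : ℝ × ℝ → ℝ × ℝ, ContDiffOn ℝ (⊤ : ℕ∞) ψ V ∧
      (∀ p ∈ U, ψ (φ p) = p) ∧ (∀ q ∈ V, φ (ψ q) = q)

/-- `φ` is a real-analytic diffeomorphism from `U` onto `V`. -/
def ALocalDiffeoOn (φ : ℝ × ℝ → ℝ × ℝ) (U V : Set (ℝ × ℝ)) : Prop :=
  IsOpen U ∧ IsOpen V ∧ AnalyticOnNhd ℝ φ U ∧ Set.BijOn φ U V ∧
    ∃ ψ : ℝ × ℝ → ℝ × ℝ, AnalyticOnNhd ℝ ψ V ∧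
      (∀ p ∈ U, ψ (φ p) = p) ∧ (∀ q ∈ V, φ (ψ q) = q)

/-- `Φ` is a (smooth) diffeomorphism of domains of `ℝ³`. -/
def LocalDiffeo3On (Φ : V3 → V3) (U V : Set V3) : Prop :=
  IsOpen U ∧ IsOpen V ∧ ContDiffOn ℝ (⊤ : ℕ∞) Φ U ∧ Set.BijOn Φ U V ∧
    ∃ Ψ : V3 → V3, ContDiffOn ℝ (⊤ : ℕ∞) Ψ V ∧
      (∀ p ∈ U, Ψ (Φ p) = p) ∧ (∀ q ∈ V, Φ (Ψ q) = q)

/-- `p` is a singular point of `f` at which `f` is locally right-left equivalent to `model`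
(with the distinguished point corresponding to the origin of the model). -/
def PointOfType (model : ℝ × ℝ → V3) (f : ℝ × ℝ → V3) (p : ℝ × ℝ) : Prop :=
  ∃ (φ : ℝ × ℝ → ℝ × ℝ) (Φ : V3 → V3) (U V : Set (ℝ × ℝ)) (W X : Set V3),
    LocalDiffeoOn φ U V ∧ ((0 : ℝ), (0 : ℝ)) ∈ U ∧ φ (0, 0) = p ∧
    LocalDiffeo3On Φ W X ∧ f p ∈ W ∧ Φ (f p) = 0 ∧
    ∀ q ∈ U, Φ (f (φ q)) = model q

/-- cuspidal edge point: local normal form `(u, v², v³)`. -/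
def IsCuspidalEdgePt (f : ℝ × ℝ → V3) (p : ℝ × ℝ) : Prop :=
  PointOfType (fun q => ![q.1, q.2 ^ 2, q.2 ^ 3]) f p

/-- cuspidal cross cap point: local normal form `(u, v², u v³)`. -/
def IsCuspidalCrossCapPt (f : ℝ × ℝ → V3) (p : ℝ × ℝ) : Prop :=
  PointOfType (fun q => ![q.1, q.2 ^ 2, q.1 * q.2 ^ 3]) f p

/-- 5/2-cuspidal edge point: local normal form `(u, v², v⁵)`. -/
def Is52CuspidalEdgePt (f : ℝ × ℝ → V3) (p : ℝ × ℝ) : Prop :=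
  PointOfType (fun q => ![q.1, q.2 ^ 2, q.2 ^ 5]) f p

/-- generalized cuspidal edge point: local normal form `(u, v², v³ α(u,v))`. -/
def IsGenCuspidalEdgePt (f : ℝ × ℝ → V3) (p : ℝ × ℝ) : Prop :=
  ∃ α : ℝ × ℝ → ℝ, ContDiff ℝ (⊤ : ℕ∞) α ∧
    PointOfType (fun q => ![q.1, q.2 ^ 2, q.2 ^ 3 * α q]) f p

/-- Curvature of a space curve (with respect to an arc-length parameter). -/
def curv3 (c : ℝ → V3) (u : ℝ) : ℝ :=
  Real.sqrt (dot3 (deriv (deriv c) u) (deriv (deriv c) u))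

/-- Principal normal vector of a space curve. -/
def pnorm3 (c : ℝ → V3) (u : ℝ) : V3 := (curv3 c u)⁻¹ • deriv (deriv c) u

/-- Binormal vector of a space curve. -/
def binorm3 (c : ℝ → V3) (u : ℝ) : V3 := cross3 (deriv c u) (pnorm3 c u)

/-- Torsion of a space curve, via `n' = -κ e + τ b`. -/
def tors3 (c : ℝ → V3) (u : ℝ) : ℝ := dot3 (deriv (pnorm3 c) u) (binorm3 c u)

/-- `c` is a real-analytic embedding of `[-l,l]`, parametrized by arc-length,
with everywhere positive curvature. -/
def GoodCurve (l : ℝ) (c : ℝ → V3) : Prop :=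
  (∃ O : Set ℝ, IsOpen O ∧ Icc (-l) l ⊆ O ∧ AnalyticOnNhd ℝ c O) ∧
  InjOn c (Icc (-l) l) ∧
  (∀ u ∈ Icc (-l) l, dot3 (deriv c u) (deriv c u) = 1) ∧
  (∀ u ∈ Icc (-l) l, 0 < curv3 c u)

/-- `f` is a generalized cuspidal edge along the curve `c`. -/
def IsGCEdge (l : ℝ) (c : ℝ → V3) (f : ℝ × ℝ → V3) : Prop :=
  (∀ u ∈ Icc (-l) l, f (u, 0) = c u) ∧ ∀ u ∈ Icc (-l) l, IsGenCuspidalEdgePt f (u, 0)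

/-- `f` is a cuspidal edge along the curve `c`. -/
def IsCEdge (l : ℝ) (c : ℝ → V3) (f : ℝ × ℝ → V3) : Prop :=
  (∀ u ∈ Icc (-l) l, f (u, 0) = c u) ∧ ∀ u ∈ Icc (-l) l, IsCuspidalEdgePt f (u, 0)

/-- `f` is real analytic on a neighborhood of `J × {0}`. -/
def AnalyticNearJ (l : ℝ) (f : ℝ × ℝ → V3) : Prop :=
  ∃ U : Set (ℝ × ℝ), IsOpen U ∧ JSet l ⊆ U ∧ AnalyticOnNhd ℝ f U

/-- `f` is written in an adapted form along its edge `c`, with cuspidal angle function `θ`: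
`f_v(u,0) = 0` and `f_vv(u,0) = cos θ(u) n(u) - sin θ(u) b(u)`. -/
def HasCuspAngle (l : ℝ) (c : ℝ → V3) (f : ℝ × ℝ → V3) (θ : ℝ → ℝ) : Prop :=
  ∀ u ∈ Icc (-l) l, pd2 f (u, 0) = 0 ∧
    pd2 (pd2 f) (u, 0) = Real.cos (θ u) • pnorm3 c u - Real.sin (θ u) • binorm3 c u

/-- A positive semi-definite metric `E du² + 2F du dv + G dv²` on (part of) the plane. -/
structure Met2 where
  E : ℝ × ℝ → ℝ
  F : ℝ × ℝ → ℝ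
  G : ℝ × ℝ → ℝ

/-- The first fundamental form of `f`. -/
def fff (f : ℝ × ℝ → V3) : Met2 := ⟨Ecoef f, Fcoef f, Gcoef f⟩

/-- Pullback of a metric under a map `φ` of the plane. -/
def pullbackMet (φ : ℝ × ℝ → ℝ × ℝ) (g : Met2) : Met2 where
  E := fun p =>
    g.E (φ p) * (pd1 (fun q => (φ q).1) p) ^ 2 +
      2 * g.F (φ p) * (pd1 (fun q => (φ q).1) p) * (pd1 (fun q => (φ q).2) p) +
      g.G (φ p) * (pd1 (fun q => (φ q).2) p) ^ 2
  F := fun p =>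
    g.E (φ p) * (pd1 (fun q => (φ q).1) p) * (pd2 (fun q => (φ q).1) p) +
      g.F (φ p) * ((pd1 (fun q => (φ q).1) p) * (pd2 (fun q => (φ q).2) p) +
        (pd1 (fun q => (φ q).2) p) * (pd2 (fun q => (φ q).1) p)) +
      g.G (φ p) * (pd1 (fun q => (φ q).2) p) * (pd2 (fun q => (φ q).2) p)
  G := fun p =>
    g.E (φ p) * (pd2 (fun q => (φ q).1) p) ^ 2 +
      2 * g.F (φ p) * (pd2 (fun q => (φ q).1) p) * (pd2 (fun q => (φ q).2) p) +
      g.G (φ p) * (pd2 (fun q => (φ q).2) p) ^ 2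

/-- Two metrics agree on a set. -/
def MetEqOn (g h : Met2) (U : Set (ℝ × ℝ)) : Prop :=
  ∀ p ∈ U, g.E p = h.E p ∧ g.F p = h.F p ∧ g.G p = h.G p

/-- `f` and `g` have the same first fundamental form near `J × {0}`. -/
def SameFFFOn (l : ℝ) (f g : ℝ × ℝ → V3) : Prop :=
  ∃ U, IsOpen U ∧ JSet l ⊆ U ∧ MetEqOn (fff f) (fff g) U

/-- `g` is right equivalent to `f` (near `J × {0}`). -/
def RightEquivTo (l : ℝ) (f g : ℝ × ℝ → V3) : Prop :=
  ∃ φ U V, LocalDiffeoOn φ U V ∧ JSet l ⊆ U ∧ ∀ p ∈ U, g p = f (φ p)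

/-- `g` is isometric to `f`: some diffeomorphism pulls `ds²_f` back to `ds²_g`. -/
def IsometricTo (l : ℝ) (f g : ℝ × ℝ → V3) : Prop :=
  ∃ φ U V, LocalDiffeoOn φ U V ∧ JSet l ⊆ U ∧
    MetEqOn (pullbackMet φ (fff f)) (fff g) U

/-- `g` is an isomer of `f`: isometric to `f` but not right equivalent to `f`. -/
def IsIsomerOf (l : ℝ) (g f : ℝ × ℝ → V3) : Prop :=
  IsometricTo l f g ∧ ¬ RightEquivTo l f g

/-- `f` and `g` have the same image near `J × {0}`. -/
def SameImageOn (l : ℝ) (f g : ℝ × ℝ → V3) : Prop :=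
  ∃ U₁ U₂ : Set (ℝ × ℝ), IsOpen U₁ ∧ IsOpen U₂ ∧ JSet l ⊆ U₁ ∧ JSet l ⊆ U₂ ∧
    f '' U₁ = g '' U₂

/-- `f` is congruent to `g` : some `T ∈ O(3)` takes the image of `f` to the image of `g`. -/
def CongruentTo (l : ℝ) (f g : ℝ × ℝ → V3) : Prop :=
  ∃ T : Matrix (Fin 3) (Fin 3) ℝ, T.transpose * T = 1 ∧
    SameImageOn l (fun p => T.mulVec (f p)) g

/-- `φ` is a symmetry of the first fundamental form of `f`. -/
def IsMetSymmetry (l : ℝ) (f : ℝ × ℝ → V3) (φ : ℝ × ℝ → ℝ × ℝ) : Prop :=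
  ∃ U V, LocalDiffeoOn φ U V ∧ JSet l ⊆ U ∧
    MetEqOn (pullbackMet φ (fff f)) (fff f) U ∧ ¬ ∀ p ∈ U, φ p = p

/-- `ds²_f` admits a symmetry. -/
def HasMetSymmetry (l : ℝ) (f : ℝ × ℝ → V3) : Prop := ∃ φ, IsMetSymmetry l f φ

/-- An effective symmetry: one reversing the orientation of the singular curve. -/
def IsEffectiveSymmetry (l : ℝ) (f : ℝ × ℝ → V3) (φ : ℝ × ℝ → ℝ × ℝ) : Prop :=
  IsMetSymmetry l f φ ∧
    ∃ h : ℝ → ℝ, StrictAntiOn h (Icc (-l) l) ∧ ∀ u ∈ Icc (-l) l, φ (u, 0) = (h u, 0)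

/-- The image `C` of the curve `c`. -/
def CurveImage (l : ℝ) (c : ℝ → V3) : Set V3 := c '' Icc (-l) l

/-- `T ∈ O(3)` is a non-trivial symmetry of the curve `C`. -/
def IsNontrivialCurveSym (l : ℝ) (c : ℝ → V3) (T : Matrix (Fin 3) (Fin 3) ℝ) : Prop :=
  T.transpose * T = 1 ∧ (fun P => T.mulVec P) '' CurveImage l c = CurveImage l c ∧
    ¬ ∀ P ∈ CurveImage l c, T.mulVec P = P

/-- `C` lies in a plane. -/
def CurvePlanar (l : ℝ) (c : ℝ → V3) : Prop :=
  ∃ (w : V3) (d : ℝ), w ≠ 0 ∧ ∀ u ∈ Icc (-l) l, dot3 w (c u) = d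

/-- The number of classes of the relation `R` among the members of `s`. -/
def classCount {α : Type*} (R : α → α → Prop) (s : Set α) : ℕ :=
  Set.ncard {t : Set α | ∃ a ∈ s, t = {b | b ∈ s ∧ R a b}}

/-- Gaussian curvature of a metric, via the Brioschi formula. -/
def gaussK (E F G : ℝ × ℝ → ℝ) (p : ℝ × ℝ) : ℝ :=
  (Matrix.det !![-(1/2) * pd2 (pd2 E) p + pd1 (pd2 F) p - (1/2) * pd1 (pd1 G) p,
                  (1/2) * pd1 E p, pd1 F p - (1/2) * pd2 E p;
                 pd2 F p - (1/2) * pd1 G p, E p, F p;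
                 (1/2) * pd2 G p, F p, G p] -
   Matrix.det !![0, (1/2) * pd2 E p, (1/2) * pd1 G p;
                 (1/2) * pd2 E p, E p, F p;
                 (1/2) * pd1 G p, F p, G p]) /
    (E p * G p - F p ^ 2) ^ 2

/-- Gaussian curvature of the first fundamental form of `f`. -/
def gaussOf (f : ℝ × ℝ → V3) : ℝ × ℝ → ℝ := gaussK (Ecoef f) (Fcoef f) (Gcoef f)

/-- The Kossowski conditions at a singular point `p`: existence of an adjusted coordinate
system in which the K-admissibility conditions hold, together with a function `λ` with
`EG - F² = λ²` and `dλ(p) ≠ 0`. -/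
def IsKossowskiAt (g : Met2) (p : ℝ × ℝ) : Prop :=
  (∃ (φ : ℝ × ℝ → ℝ × ℝ) (U V : Set (ℝ × ℝ)), LocalDiffeoOn φ U V ∧ ((0:ℝ),(0:ℝ)) ∈ U ∧
      φ (0, 0) = p ∧
      (pullbackMet φ g).F (0, 0) = 0 ∧ (pullbackMet φ g).G (0, 0) = 0 ∧
      pd2 (pullbackMet φ g).E (0, 0) = 2 * pd1 (pullbackMet φ g).F (0, 0) ∧
      pd1 (pullbackMet φ g).G (0, 0) = 0 ∧ pd2 (pullbackMet φ g).G (0, 0) = 0) ∧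
  ∃ (W : Set (ℝ × ℝ)) (lam : ℝ × ℝ → ℝ), IsOpen W ∧ p ∈ W ∧ ContDiffOn ℝ (⊤ : ℕ∞) lam W ∧
    (∀ q ∈ W, g.E q * g.G q - g.F q ^ 2 = lam q ^ 2) ∧
    ¬ (pd1 lam p = 0 ∧ pd2 lam p = 0)

/-- `p` is a non-parabolic singular point: the Euler form `Ω = λ K du∧dv` extends
across the singular set and does not vanish at `p`. -/
def NonParabolicAt (g : Met2) (lam : ℝ × ℝ → ℝ) (p : ℝ × ℝ) : Prop :=
  ∃ (W : Set (ℝ × ℝ)) (Ω : ℝ × ℝ → ℝ), IsOpen W ∧ p ∈ W ∧ ContinuousOn Ω W ∧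
    (∀ q ∈ W, g.E q * g.G q - g.F q ^ 2 ≠ 0 → Ω q = lam q * gaussK g.E g.F g.G q) ∧
    Ω p ≠ 0


/-! ### Auxiliary lemmas for `stmt_5` -/

lemma dot3_self_nonneg (x : V3) : 0 ≤ dot3 x x := by
  simp only [dot3]; nlinarith [sq_nonneg (x 0), sq_nonneg (x 1), sq_nonneg (x 2)]

lemma dot3_self_pos {x : V3} (hx : x ≠ 0) : 0 < dot3 x x := by
  rcases (dot3_self_nonneg x).lt_or_eq with h | h
  · exact h
  · exfalso; apply hx; funext i
    have h0 : x 0 = 0 ∧ x 1 = 0 ∧ x 2 = 0 := by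
      simp only [dot3] at h
      refine ⟨?_, ?_, ?_⟩ <;> nlinarith [sq_nonneg (x 0), sq_nonneg (x 1), sq_nonneg (x 2)]
    fin_cases i <;> simp [h0.1, h0.2.1, h0.2.2]

lemma dot3_smul_right (t : ℝ) (x y : V3) : dot3 x (t • y) = t * dot3 x y := by
  simp only [dot3, Pi.smul_apply, smul_eq_mul]; ring

lemma dot3_smul_left (t : ℝ) (x y : V3) : dot3 (t • x) y = t * dot3 x y := by
  simp only [dot3, Pi.smul_apply, smul_eq_mul]; ring

lemma lagrange3 (x y : V3) :
    dot3 x x * dot3 y y - dot3 x y ^ 2 = dot3 (cross3 x y) (cross3 x y) := by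
  simp only [dot3, cross3, Matrix.cons_val_zero, Matrix.cons_val_one, Matrix.head_cons,
    Matrix.cons_val_two, Matrix.tail_cons]
  ring

lemma hasDerivAt_dot3 {a b : ℝ → V3} {a' b' : V3} {t : ℝ}
    (ha : HasDerivAt a a' t) (hb : HasDerivAt b b' t) :
    HasDerivAt (fun v => dot3 (a v) (b v)) (dot3 a' (b t) + dot3 (a t) b') t := by
  have ha' := hasDerivAt_pi.mp ha
  have hb' := hasDerivAt_pi.mp hb
  have h := (((ha' 0).mul (hb' 0)).add ((ha' 1).mul (hb' 1))).add ((ha' 2).mul (hb' 2))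
  convert h using 1
  · rfl
  · rfl
  · funext v; simp only [dot3, Pi.add_apply, Pi.mul_apply]
  · simp only [dot3]; ring

lemma hasDerivAt_slice1 {E : Type*} [NormedAddCommGroup E] [NormedSpace ℝ E]
    {ξ : ℝ × ℝ → E} (hξ : Differentiable ℝ ξ) (p : ℝ × ℝ) :
    HasDerivAt (fun u => ξ (u, p.2)) (fderiv ℝ ξ p ((1:ℝ), (0:ℝ))) p.1 := by
  have h1 : HasDerivAt (fun u : ℝ => (u, p.2)) ((1:ℝ), (0:ℝ)) p.1 :=
    (hasDerivAt_id p.1).prodMk (hasDerivAt_const p.1 p.2)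
  have h2 : HasFDerivAt ξ (fderiv ℝ ξ p) ((p.1, p.2) : ℝ × ℝ) := by
    rw [Prod.mk.eta]; exact (hξ p).hasFDerivAt
  exact h2.comp_hasDerivAt p.1 h1

lemma hasDerivAt_slice2 {E : Type*} [NormedAddCommGroup E] [NormedSpace ℝ E]
    {ξ : ℝ × ℝ → E} (hξ : Differentiable ℝ ξ) (p : ℝ × ℝ) :
    HasDerivAt (fun v => ξ (p.1, v)) (fderiv ℝ ξ p ((0:ℝ), (1:ℝ))) p.2 := by
  have h1 : HasDerivAt (fun v : ℝ => (p.1, v)) ((0:ℝ), (1:ℝ)) p.2 :=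
    (hasDerivAt_const p.2 p.1).prodMk (hasDerivAt_id p.2)
  have h2 : HasFDerivAt ξ (fderiv ℝ ξ p) ((p.1, p.2) : ℝ × ℝ) := by
    rw [Prod.mk.eta]; exact (hξ p).hasFDerivAt
  exact h2.comp_hasDerivAt p.2 h1

lemma pd1_eq_fderiv {E : Type*} [NormedAddCommGroup E] [NormedSpace ℝ E]
    {ξ : ℝ × ℝ → E} (hξ : Differentiable ℝ ξ) (p : ℝ × ℝ) :
    pd1 ξ p = fderiv ℝ ξ p ((1:ℝ), (0:ℝ)) := (hasDerivAt_slice1 hξ p).deriv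

lemma pd2_eq_fderiv {E : Type*} [NormedAddCommGroup E] [NormedSpace ℝ E]
    {ξ : ℝ × ℝ → E} (hξ : Differentiable ℝ ξ) (p : ℝ × ℝ) :
    pd2 ξ p = fderiv ℝ ξ p ((0:ℝ), (1:ℝ)) := (hasDerivAt_slice2 hξ p).deriv

lemma contDiff_pd1 {ξ : ℝ × ℝ → V3} (hξ : ContDiff ℝ (⊤ : ℕ∞) ξ) : ContDiff ℝ (⊤ : ℕ∞) (pd1 ξ) := by
  have h : pd1 ξ = fun p => fderiv ℝ ξ p ((1:ℝ), (0:ℝ)) :=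
    funext fun p => pd1_eq_fderiv (hξ.differentiable (by simp)) p
  rw [h]
  exact (hξ.fderiv_right (by simp)).clm_apply contDiff_const

lemma contDiff_pd2 {ξ : ℝ × ℝ → V3} (hξ : ContDiff ℝ (⊤ : ℕ∞) ξ) : ContDiff ℝ (⊤ : ℕ∞) (pd2 ξ) := by
  have h : pd2 ξ = fun p => fderiv ℝ ξ p ((0:ℝ), (1:ℝ)) :=
    funext fun p => pd2_eq_fderiv (hξ.differentiable (by simp)) p
  rw [h]
  exact (hξ.fderiv_right (by simp)).clm_apply contDiff_const

lemma hasDerivAt_id_mul_cont {g : ℝ → ℝ} (hg : ContinuousAt g 0) :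
    HasDerivAt (fun v => v * g v) (g 0) 0 := by
  rw [hasDerivAt_iff_tendsto_slope]
  have ht : Tendsto g (𝓝[≠] (0:ℝ)) (𝓝 (g 0)) := hg.continuousWithinAt.tendsto
  refine ht.congr' ?_
  filter_upwards [self_mem_nhdsWithin] with v hv
  have hv' : v ≠ 0 := hv
  rw [slope_def_field]
  field_simp
  ring

lemma hasDerivAt_sq_mul_cont {g : ℝ → ℝ} (hg : ContinuousAt g 0) :
    HasDerivAt (fun v => v ^ 2 * g v) 0 0 := by
  rw [hasDerivAt_iff_tendsto_slope]
  have ht : Tendsto (fun v => v * g v) (𝓝[≠] (0:ℝ)) (𝓝 (0 * g 0)) :=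
    ((continuousAt_id.mul hg).tendsto).mono_left nhdsWithin_le_nhds
  rw [zero_mul] at ht
  refine ht.congr' ?_
  filter_upwards [self_mem_nhdsWithin] with v hv
  have hv' : v ≠ 0 := hv
  rw [slope_def_field]
  field_simp
  ring

lemma continuous_dot3 {a b : ℝ → V3} (ha : Continuous a) (hb : Continuous b) :
    Continuous fun v => dot3 (a v) (b v) := by
  simp only [dot3]
  have h1 : ∀ i : Fin 3, Continuous fun v => a v i := fun i => (continuous_apply i).comp ha
  have h2 : ∀ i : Fin 3, Continuous fun v => b v i := fun i => (continuous_apply i).comp hb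
  exact (((h1 0).mul (h2 0)).add ((h1 1).mul (h2 1))).add ((h1 2).mul (h2 2))

lemma cross3_ne_zero_of_li {x y : V3} (hx : dot3 x x = 1)
    (h : LinearIndependent ℝ ![x, y]) : cross3 x y ≠ 0 := by
  intro h0
  have e0 := congrFun h0 0
  have e1 := congrFun h0 1
  have e2 := congrFun h0 2
  simp only [cross3, Matrix.cons_val_zero, Matrix.cons_val_one, Matrix.head_cons,
    Matrix.cons_val_two, Matrix.tail_cons, Pi.zero_apply] at e0 e1 e2
  simp only [dot3] at hx
  set t := dot3 x y with ht
  have hy : y = t • x := by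
    funext i
    have hy0 : y 0 = t * x 0 := by
      rw [ht]; simp only [dot3]
      linear_combination (-(y 0)) * hx - x 1 * e2 + x 2 * e1
    have hy1 : y 1 = t * x 1 := by
      rw [ht]; simp only [dot3]
      linear_combination (-(y 1)) * hx + x 0 * e2 - x 2 * e0
    have hy2 : y 2 = t * x 2 := by
      rw [ht]; simp only [dot3]
      linear_combination (-(y 2)) * hx - x 0 * e1 + x 1 * e0
    fin_cases i
    · exact hy0
    · exact hy1
    · exact hy2
  rw [linearIndependent_fin2] at h
  simp only [Matrix.cons_val_one, Matrix.head_cons, Matrix.cons_val_zero] at h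
  rcases eq_or_ne t 0 with hz | hz
  · exact h.1 (by rw [hy, hz, zero_smul])
  · exact h.2 t⁻¹ (by rw [hy, smul_smul, inv_mul_cancel₀ hz, one_smul])
/-- the first fundamental form of a generalized cuspidal edge
`f(u,v) = c(u) + (v²/2) ξ̂(u,v)` is a Kossowski metric of type I, with
`EG - F² = λ²`, `λ = v λ₀`, `λ₀(u,0) ≠ 0` (Proposition 2.1). -/
theorem stmt_5 (l : ℝ) (hl : 0 < l) (c : ℝ → V3) (ξ : ℝ × ℝ → V3)
    (hc : GoodCurve l c)
    (hξ : ContDiff ℝ (⊤ : ℕ∞) ξ)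
    (hind : ∀ u ∈ Icc (-l) l, LinearIndependent ℝ ![deriv c u, ξ (u, 0)]) :
    ∃ W : Set (ℝ × ℝ), IsOpen W ∧ JSet l ⊆ W ∧
      -- with f = c + (v²/2) ξ̂ and λ₀ = |(c' + (v²/2) ξ̂_u) × (ξ̂ + (v/2) ξ̂_v)|:
      (∀ p ∈ W,
        Ecoef (fun q : ℝ × ℝ => c q.1 + (q.2 ^ 2 / 2) • ξ q) p *
            Gcoef (fun q : ℝ × ℝ => c q.1 + (q.2 ^ 2 / 2) • ξ q) p -
            Fcoef (fun q : ℝ × ℝ => c q.1 + (q.2 ^ 2 / 2) • ξ q) p ^ 2 =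
          (p.2 * Real.sqrt (dot3
            (cross3 (deriv c p.1 + (p.2 ^ 2 / 2) • pd1 ξ p) (ξ p + (p.2 / 2) • pd2 ξ p))
            (cross3 (deriv c p.1 + (p.2 ^ 2 / 2) • pd1 ξ p) (ξ p + (p.2 / 2) • pd2 ξ p)))) ^ 2) ∧
      -- the singular set of the metric in `W` is exactly the `u`-axis
      (∀ p ∈ W,
        (Ecoef (fun q : ℝ × ℝ => c q.1 + (q.2 ^ 2 / 2) • ξ q) p *
            Gcoef (fun q : ℝ × ℝ => c q.1 + (q.2 ^ 2 / 2) • ξ q) p -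
            Fcoef (fun q : ℝ × ℝ => c q.1 + (q.2 ^ 2 / 2) • ξ q) p ^ 2 = 0 ↔ p.2 = 0)) ∧
      ∀ u ∈ Icc (-l) l,
        -- λ₀(u,0) ≠ 0, and λ_v(u,0) ≠ 0
        Real.sqrt (dot3
            (cross3 (deriv c u + ((0:ℝ) ^ 2 / 2) • pd1 ξ (u, 0)) (ξ (u, 0) + ((0:ℝ) / 2) • pd2 ξ (u, 0)))
            (cross3 (deriv c u + ((0:ℝ) ^ 2 / 2) • pd1 ξ (u, 0)) (ξ (u, 0) + ((0:ℝ) / 2) • pd2 ξ (u, 0)))) ≠ 0 ∧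
        pd2 (fun p : ℝ × ℝ => p.2 * Real.sqrt (dot3
            (cross3 (deriv c p.1 + (p.2 ^ 2 / 2) • pd1 ξ p) (ξ p + (p.2 / 2) • pd2 ξ p))
            (cross3 (deriv c p.1 + (p.2 ^ 2 / 2) • pd1 ξ p) (ξ p + (p.2 / 2) • pd2 ξ p)))) (u, 0) ≠ 0 ∧
        -- K-admissibility conditions at (u,0)
        pd2 (Ecoef (fun q : ℝ × ℝ => c q.1 + (q.2 ^ 2 / 2) • ξ q)) (u, 0) =
          2 * pd1 (Fcoef (fun q : ℝ × ℝ => c q.1 + (q.2 ^ 2 / 2) • ξ q)) (u, 0) ∧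
        pd1 (Gcoef (fun q : ℝ × ℝ => c q.1 + (q.2 ^ 2 / 2) • ξ q)) (u, 0) = 0 ∧
        pd2 (Gcoef (fun q : ℝ × ℝ => c q.1 + (q.2 ^ 2 / 2) • ξ q)) (u, 0) = 0 ∧
        -- at (u,0): ∂_v is a null direction, independent of the singular direction ∂_u
        Fcoef (fun q : ℝ × ℝ => c q.1 + (q.2 ^ 2 / 2) • ξ q) (u, 0) = 0 ∧
        Gcoef (fun q : ℝ × ℝ => c q.1 + (q.2 ^ 2 / 2) • ξ q) (u, 0) = 0 ∧
        0 < Ecoef (fun q : ℝ × ℝ => c q.1 + (q.2 ^ 2 / 2) • ξ q) (u, 0) ∧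
        -- the Kossowski conditions hold at (u,0)
        IsKossowskiAt (fff (fun q : ℝ × ℝ => c q.1 + (q.2 ^ 2 / 2) • ξ q)) (u, 0) := by
  classical
  obtain ⟨⟨O, hOo, hJO, hca⟩, -, hunit, -⟩ := hc
  have hξd : Differentiable ℝ ξ := hξ.differentiable (by simp)
  set f : ℝ × ℝ → V3 := fun q : ℝ × ℝ => c q.1 + (q.2 ^ 2 / 2) • ξ q with hfdef
  -- partial derivative formulas
  have hpd1f : ∀ p : ℝ × ℝ, p.1 ∈ O →
      pd1 f p = deriv c p.1 + (p.2 ^ 2 / 2) • pd1 ξ p := by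
    intro p hp
    have h' : HasDerivAt (fun t => c t + (p.2 ^ 2 / 2) • ξ (t, p.2))
        (deriv c p.1 + (p.2 ^ 2 / 2) • pd1 ξ p) p.1 := by
      have h := ((hca p.1 hp).differentiableAt.hasDerivAt).add
        ((hasDerivAt_slice1 hξd p).const_smul (p.2 ^ 2 / 2))
      convert h using 2
      case e'_4 => rfl
      case e'_5 => rfl
      case e'_6 => rfl
      case e'_8 => rfl
      rw [pd1_eq_fderiv hξd p]
    exact h'.deriv
  have hpd2f : ∀ p : ℝ × ℝ,
      pd2 f p = p.2 • ξ p + (p.2 ^ 2 / 2) • pd2 ξ p := by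
    intro p
    have h' : HasDerivAt (fun v => c p.1 + (v ^ 2 / 2) • ξ (p.1, v))
        (p.2 • ξ p + (p.2 ^ 2 / 2) • pd2 ξ p) p.2 := by
      have h := (hasDerivAt_const p.2 (c p.1)).add
        (((hasDerivAt_pow 2 p.2).div_const 2).smul (hasDerivAt_slice2 hξd p))
      convert h using 1
      case e'_4 => rfl
      case e'_5 => rfl
      case e'_6 => rfl
      case e'_8 => rfl
      rw [← pd2_eq_fderiv hξd p]
      simp only [Prod.mk.eta, pow_one, Nat.cast_ofNat]
      module
    exact h'.deriv
  have hBfact : ∀ p : ℝ × ℝ, pd2 f p = p.2 • (ξ p + (p.2 / 2) • pd2 ξ p) := by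
    intro p
    rw [hpd2f p, smul_add, smul_smul]
    congr 2
    ring
  -- coefficient formulas
  have hEc : ∀ p : ℝ × ℝ, p.1 ∈ O → Ecoef f p =
      dot3 (deriv c p.1 + (p.2 ^ 2 / 2) • pd1 ξ p) (deriv c p.1 + (p.2 ^ 2 / 2) • pd1 ξ p) := by
    intro p hp; simp only [Ecoef]; rw [hpd1f p hp]
  have hFc : ∀ p : ℝ × ℝ, p.1 ∈ O → Fcoef f p =
      p.2 * dot3 (deriv c p.1 + (p.2 ^ 2 / 2) • pd1 ξ p) (ξ p + (p.2 / 2) • pd2 ξ p) := by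
    intro p hp; simp only [Fcoef]; rw [hpd1f p hp, hBfact p, dot3_smul_right]
  have hGc : ∀ p : ℝ × ℝ, Gcoef f p =
      p.2 ^ 2 * dot3 (ξ p + (p.2 / 2) • pd2 ξ p) (ξ p + (p.2 / 2) • pd2 ξ p) := by
    intro p; simp only [Gcoef]; rw [hBfact p, dot3_smul_left, dot3_smul_right]; ring
  have key : ∀ p : ℝ × ℝ, p.1 ∈ O →
      Ecoef f p * Gcoef f p - Fcoef f p ^ 2 =
      p.2 ^ 2 * dot3
        (cross3 (deriv c p.1 + (p.2 ^ 2 / 2) • pd1 ξ p) (ξ p + (p.2 / 2) • pd2 ξ p))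
        (cross3 (deriv c p.1 + (p.2 ^ 2 / 2) • pd1 ξ p) (ξ p + (p.2 / 2) • pd2 ξ p)) := by
    intro p hp
    rw [hEc p hp, hFc p hp, hGc p, ← lagrange3]
    ring
  -- smoothness
  have hpd1c : ContDiff ℝ (⊤ : ℕ∞) (pd1 ξ) := contDiff_pd1 hξ
  have hpd2c : ContDiff ℝ (⊤ : ℕ∞) (pd2 ξ) := contDiff_pd2 hξ
  have hAcd : ContDiffOn ℝ (⊤ : ℕ∞) (fun p : ℝ × ℝ => deriv c p.1 + (p.2 ^ 2 / 2) • pd1 ξ p)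
      (O ×ˢ (univ : Set ℝ)) := by
    refine ContDiffOn.add ?_ ?_
    · exact (hca.deriv.contDiffOn hOo.uniqueDiffOn).comp contDiff_fst.contDiffOn
        (fun p hp => hp.1)
    · exact (((contDiff_snd.pow 2).div_const 2).smul hpd1c).contDiffOn
  have hBcd : ContDiffOn ℝ (⊤ : ℕ∞) (fun p : ℝ × ℝ => ξ p + (p.2 / 2) • pd2 ξ p)
      (O ×ˢ (univ : Set ℝ)) :=
    (hξ.add ((contDiff_snd.div_const 2).smul hpd2c)).contDiffOn
  have hai := fun i => contDiffOn_pi.mp hAcd i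
  have hbi := fun i => contDiffOn_pi.mp hBcd i
  set Dfun : ℝ × ℝ → ℝ := fun p => dot3
      (cross3 (deriv c p.1 + (p.2 ^ 2 / 2) • pd1 ξ p) (ξ p + (p.2 / 2) • pd2 ξ p))
      (cross3 (deriv c p.1 + (p.2 ^ 2 / 2) • pd1 ξ p) (ξ p + (p.2 / 2) • pd2 ξ p)) with hDdef
  have hDcd : ContDiffOn ℝ (⊤ : ℕ∞) Dfun (O ×ˢ (univ : Set ℝ)) := by
    rw [hDdef]
    simp only [dot3, cross3, Matrix.cons_val_zero, Matrix.cons_val_one, Matrix.head_cons,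
      Matrix.cons_val_two, Matrix.tail_cons]
    exact (((((hai 1).mul (hbi 2)).sub ((hai 2).mul (hbi 1))).mul
            (((hai 1).mul (hbi 2)).sub ((hai 2).mul (hbi 1)))).add
          ((((hai 2).mul (hbi 0)).sub ((hai 0).mul (hbi 2))).mul
            (((hai 2).mul (hbi 0)).sub ((hai 0).mul (hbi 2))))).add
          ((((hai 0).mul (hbi 1)).sub ((hai 1).mul (hbi 0))).mul
            (((hai 0).mul (hbi 1)).sub ((hai 1).mul (hbi 0))))
  have hDct : ContinuousOn Dfun (O ×ˢ (univ : Set ℝ)) := hDcd.continuousOn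
  set W : Set (ℝ × ℝ) := (O ×ˢ (univ : Set ℝ)) ∩ Dfun ⁻¹' (Ioi 0) with hWdef
  have hWo : IsOpen W := hDct.isOpen_inter_preimage (hOo.prod isOpen_univ) isOpen_Ioi
  have hmemW : ∀ p ∈ W, p.1 ∈ O ∧ 0 < Dfun p := fun p hp => ⟨hp.1.1, hp.2⟩
  have hcross : ∀ u ∈ Icc (-l) l, cross3 (deriv c u) (ξ (u, 0)) ≠ 0 := fun u hu =>
    cross3_ne_zero_of_li (hunit u hu) (hind u hu)
  have hD0 : ∀ u ∈ Icc (-l) l, 0 < Dfun (u, 0) := by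
    intro u hu
    rw [hDdef]
    simpa using dot3_self_pos (hcross u hu)
  have hJW : JSet l ⊆ W := by
    rintro ⟨u, v⟩ ⟨hu, hv⟩
    obtain rfl : v = (0 : ℝ) := hv
    exact ⟨⟨hJO hu, trivial⟩, hD0 u hu⟩
  -- values on the u-axis
  have hF00 : ∀ t : ℝ, Fcoef f (t, 0) = 0 := by
    intro t
    have h2 : pd2 f (t, 0) = 0 := by simpa using hpd2f (t, 0)
    simp [Fcoef, h2, dot3]
  have hG00 : ∀ t : ℝ, Gcoef f (t, 0) = 0 := by
    intro t
    have h2 : pd2 f (t, 0) = 0 := by simpa using hpd2f (t, 0)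
    simp [Gcoef, h2, dot3]
  refine ⟨W, hWo, hJW, ?_, ?_, ?_⟩
  · intro p hp
    rw [key p (hmemW p hp).1, mul_pow, Real.sq_sqrt (dot3_self_nonneg _)]
  · intro p hp
    rw [key p (hmemW p hp).1]
    have hDp : 0 < Dfun p := (hmemW p hp).2
    rw [hDdef] at hDp
    simp only at hDp
    constructor
    · intro h
      rcases mul_eq_zero.mp h with h1 | h2
      · exact (pow_eq_zero_iff two_ne_zero).mp h1
      · exact absurd h2 hDp.ne'
    · intro h
      rw [h]
      simp
  · intro u hu
    have huO : u ∈ O := hJO hu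
    have hD0u : 0 < Dfun (u, 0) := hD0 u hu
    have hsqne : Real.sqrt (Dfun (u, 0)) ≠ 0 := (Real.sqrt_pos.mpr hD0u).ne'
    -- E(u,0) = 1
    have hE1 : Ecoef f (u, 0) = 1 := by
      have h := hEc (u, 0) huO
      simp only [Prod.fst, Prod.snd] at h
      norm_num at h
      rw [h]
      exact hunit u hu
    -- E_v(u,0) = 0
    have hEv : pd2 (Ecoef f) (u, 0) = 0 := by
      have hsl := hasDerivAt_slice2 (hpd1c.differentiable (by simp)) ((u, 0) : ℝ × ℝ)
      have ha : HasDerivAt (fun v => deriv c u + (v ^ 2 / 2) • pd1 ξ (u, v))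
          (0 : V3) 0 := by
        have h := (hasDerivAt_const (0:ℝ) (deriv c u)).add
          (((hasDerivAt_pow 2 (0:ℝ)).div_const 2).smul hsl)
        convert h using 1
        case e'_4 => rfl
        case e'_5 => rfl
        case e'_6 => rfl
        case e'_8 => rfl
        norm_num
      have hd := hasDerivAt_dot3 ha ha
      have hfun : (fun v => Ecoef f (u, v)) = fun v =>
          dot3 (deriv c u + (v ^ 2 / 2) • pd1 ξ (u, v))
               (deriv c u + (v ^ 2 / 2) • pd1 ξ (u, v)) :=
        funext fun v => by simpa using hEc (u, v) huO
      show deriv (fun v => Ecoef f (u, v)) 0 = 0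
      rw [hfun]
      have h9 : deriv (fun v => dot3 (deriv c u + (v ^ 2 / 2) • pd1 ξ (u, v))
          (deriv c u + (v ^ 2 / 2) • pd1 ξ (u, v))) 0 = dot3 0
            (deriv c u + ((0:ℝ) ^ 2 / 2) • pd1 ξ (u, 0)) +
          dot3 (deriv c u + ((0:ℝ) ^ 2 / 2) • pd1 ξ (u, 0)) 0 := hd.deriv
      rw [h9]
      simp [dot3]
    -- F_u(u,0) = 0
    have hFu : pd1 (Fcoef f) (u, 0) = 0 := by
      have hfun : (fun t => Fcoef f (t, (0:ℝ))) = fun _ => (0:ℝ) := funext fun t => hF00 t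
      show deriv (fun t => Fcoef f (t, (0:ℝ))) u = 0
      rw [hfun]
      exact deriv_const u 0
    -- G_u(u,0) = 0
    have hGu : pd1 (Gcoef f) (u, 0) = 0 := by
      have hfun : (fun t => Gcoef f (t, (0:ℝ))) = fun _ => (0:ℝ) := funext fun t => hG00 t
      show deriv (fun t => Gcoef f (t, (0:ℝ))) u = 0
      rw [hfun]
      exact deriv_const u 0
    -- G_v(u,0) = 0
    have hGv : pd2 (Gcoef f) (u, 0) = 0 := by
      have h1 : Continuous (fun v : ℝ => ((u, v) : ℝ × ℝ)) := Continuous.prodMk_right u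
      have hbbc : Continuous (fun v : ℝ => ξ (u, v) + (v / 2) • pd2 ξ (u, v)) :=
        (hξ.continuous.comp h1).add
          ((continuous_id.div_const 2).smul (hpd2c.continuous.comp h1))
      have hk : ContinuousAt (fun v : ℝ => dot3 (ξ (u, v) + (v / 2) • pd2 ξ (u, v))
          (ξ (u, v) + (v / 2) • pd2 ξ (u, v))) 0 :=
        (continuous_dot3 hbbc hbbc).continuousAt
      have hfun : (fun v => Gcoef f (u, v)) = fun v =>
          v ^ 2 * dot3 (ξ (u, v) + (v / 2) • pd2 ξ (u, v))
            (ξ (u, v) + (v / 2) • pd2 ξ (u, v)) :=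
        funext fun v => by simpa using hGc (u, v)
      show deriv (fun v => Gcoef f (u, v)) 0 = 0
      rw [hfun]
      have h9 : deriv (fun v => v ^ 2 * dot3 (ξ (u, v) + (v / 2) • pd2 ξ (u, v))
          (ξ (u, v) + (v / 2) • pd2 ξ (u, v))) 0 = 0 := (hasDerivAt_sq_mul_cont hk).deriv
      exact h9
    -- lambda_v(u,0) = sqrt(D(u,0)) ≠ 0
    have hDat : ContinuousAt Dfun (u, 0) :=
      hDct.continuousAt ((hOo.prod isOpen_univ).mem_nhds ⟨huO, trivial⟩)
    have hgc : ContinuousAt (fun v : ℝ => Real.sqrt (Dfun (u, v))) 0 :=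
      (Real.continuous_sqrt.continuousAt).comp
        (hDat.comp (Continuous.prodMk_right u).continuousAt)
    have hlam2 : pd2 (fun p : ℝ × ℝ => p.2 * Real.sqrt (Dfun p)) (u, 0) =
        Real.sqrt (Dfun (u, 0)) := (hasDerivAt_id_mul_cont hgc).deriv
    refine ⟨?_, ?_, ?_, hGu, hGv, hF00 u, hG00 u, ?_, ?_⟩
    · -- sqrt(D(u,0)) ≠ 0
      have h2 : (0:ℝ) < dot3
          (cross3 (deriv c u + ((0:ℝ) ^ 2 / 2) • pd1 ξ (u, 0))
            (ξ (u, 0) + ((0:ℝ) / 2) • pd2 ξ (u, 0)))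
          (cross3 (deriv c u + ((0:ℝ) ^ 2 / 2) • pd1 ξ (u, 0))
            (ξ (u, 0) + ((0:ℝ) / 2) • pd2 ξ (u, 0))) := by
        simpa using dot3_self_pos (hcross u hu)
      exact (Real.sqrt_pos.mpr h2).ne'
    · -- lambda_v(u,0) ≠ 0
      show pd2 (fun p : ℝ × ℝ => p.2 * Real.sqrt (Dfun p)) (u, 0) ≠ 0
      rw [hlam2]
      exact hsqne
    · -- E_v = 2 F_u
      show pd2 (Ecoef f) (u, 0) = 2 * pd1 (Fcoef f) (u, 0)
      rw [hEv, hFu]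
      norm_num
    · -- 0 < E(u,0)
      show (0:ℝ) < Ecoef f (u, 0)
      rw [hE1]
      norm_num
    · -- Kossowski
      constructor
      · set φ : ℝ × ℝ → ℝ × ℝ := fun q => (q.1 + u, q.2) with hphi
        have h11 : ∀ p : ℝ × ℝ, pd1 (fun q : ℝ × ℝ => (φ q).1) p = 1 := by
          intro p
          show deriv (fun t => t + u) p.1 = 1
          exact ((hasDerivAt_id p.1).add_const u).deriv
        have h21 : ∀ p : ℝ × ℝ, pd2 (fun q : ℝ × ℝ => (φ q).1) p = 0 := by
          intro p
          show deriv (fun _ : ℝ => p.1 + u) p.2 = 0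
          exact deriv_const p.2 (p.1 + u)
        have h12 : ∀ p : ℝ × ℝ, pd1 (fun q : ℝ × ℝ => (φ q).2) p = 0 := by
          intro p
          show deriv (fun _ : ℝ => p.2) p.1 = 0
          exact deriv_const p.1 p.2
        have h22 : ∀ p : ℝ × ℝ, pd2 (fun q : ℝ × ℝ => (φ q).2) p = 1 := by
          intro p
          show deriv (fun v : ℝ => v) p.2 = 1
          exact deriv_id p.2
        have hPE : ∀ p : ℝ × ℝ, (pullbackMet φ (fff f)).E p = Ecoef f (φ p) := by
          intro p
          simp only [pullbackMet, fff]
          rw [h11 p, h12 p]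
          ring
        have hPF : ∀ p : ℝ × ℝ, (pullbackMet φ (fff f)).F p = Fcoef f (φ p) := by
          intro p
          simp only [pullbackMet, fff]
          rw [h11 p, h12 p, h21 p, h22 p]
          ring
        have hPG : ∀ p : ℝ × ℝ, (pullbackMet φ (fff f)).G p = Gcoef f (φ p) := by
          intro p
          simp only [pullbackMet, fff]
          rw [h21 p, h22 p]
          ring
        have hL : ∀ p : ℝ × ℝ, (fun q : ℝ × ℝ => (q.1 - u, q.2)) (φ p) = p := by
          intro p; rw [hphi]; simp [Prod.ext_iff]
        have hR : ∀ p : ℝ × ℝ, φ ((fun q : ℝ × ℝ => (q.1 - u, q.2)) p) = p := by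
          intro p; rw [hphi]; simp [Prod.ext_iff]
        refine ⟨φ, univ, univ, ?_, mem_univ _, ?_, ?_, ?_, ?_, ?_, ?_⟩
        · refine ⟨isOpen_univ, isOpen_univ, ?_, ?_, fun q : ℝ × ℝ => (q.1 - u, q.2), ?_,
            fun p _ => hL p, fun q _ => hR q⟩
          · rw [hphi]
            exact ((contDiff_fst.add contDiff_const).prodMk contDiff_snd).contDiffOn
          · have hL' : Function.LeftInverse (fun q : ℝ × ℝ => (q.1 - u, q.2)) φ := hL
            have hR' : Function.RightInverse (fun q : ℝ × ℝ => (q.1 - u, q.2)) φ := hR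
            exact bijOn_univ.mpr ⟨hL'.injective, hR'.surjective⟩
          · exact ((contDiff_fst.sub contDiff_const).prodMk contDiff_snd).contDiffOn
        · rw [hphi]; simp
        · rw [hPF]
          have : φ ((0:ℝ), (0:ℝ)) = (u, 0) := by rw [hphi]; simp
          rw [this]
          exact hF00 u
        · rw [hPG]
          have : φ ((0:ℝ), (0:ℝ)) = (u, 0) := by rw [hphi]; simp
          rw [this]
          exact hG00 u
        · have hA : pd2 (pullbackMet φ (fff f)).E (0, 0) = 0 := by
            have hfun : (fun v : ℝ => (pullbackMet φ (fff f)).E (0, v)) =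
                fun v => Ecoef f (u, v) := funext fun v => by
              rw [hPE]; rw [hphi]; norm_num
            show deriv (fun v : ℝ => (pullbackMet φ (fff f)).E (0, v)) 0 = 0
            rw [hfun]
            exact hEv
          have hB : pd1 (pullbackMet φ (fff f)).F (0, 0) = 0 := by
            have hfun : (fun t : ℝ => (pullbackMet φ (fff f)).F (t, 0)) =
                fun _ => (0:ℝ) := funext fun t => by
              rw [hPF]; rw [hphi]; exact hF00 (t + u)
            show deriv (fun t : ℝ => (pullbackMet φ (fff f)).F (t, 0)) 0 = 0
            rw [hfun]
            exact deriv_const 0 0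
          rw [hA, hB]
          norm_num
        · have hfun : (fun t : ℝ => (pullbackMet φ (fff f)).G (t, 0)) =
              fun _ => (0:ℝ) := funext fun t => by
            rw [hPG]; rw [hphi]; exact hG00 (t + u)
          show deriv (fun t : ℝ => (pullbackMet φ (fff f)).G (t, 0)) 0 = 0
          rw [hfun]
          exact deriv_const 0 0
        · have hfun : (fun v : ℝ => (pullbackMet φ (fff f)).G (0, v)) =
              fun v => Gcoef f (u, v) := funext fun v => by
            rw [hPG]; rw [hphi]; norm_num
          show deriv (fun v : ℝ => (pullbackMet φ (fff f)).G (0, v)) 0 = 0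
          rw [hfun]
          exact hGv
      · refine ⟨W, fun p : ℝ × ℝ => p.2 * Real.sqrt (Dfun p), hWo,
          hJW (show ((u, (0:ℝ)) : ℝ × ℝ) ∈ JSet l from ⟨hu, rfl⟩), ?_, ?_, ?_⟩
        · have hs : ContDiffOn ℝ (⊤ : ℕ∞) (fun p : ℝ × ℝ => Real.sqrt (Dfun p)) W :=
            (hDcd.mono inter_subset_left).sqrt (fun x hx => ((hx.2 : 0 < Dfun x)).ne')
          exact (contDiff_snd.contDiffOn).mul hs
        · intro q hq
          show Ecoef f q * Gcoef f q - Fcoef f q ^ 2 = (q.2 * Real.sqrt (Dfun q)) ^ 2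
          rw [key q (hmemW q hq).1, mul_pow, Real.sq_sqrt (dot3_self_nonneg _)]
        · intro hcontra
          exact hsqne (hlam2 ▸ hcontra.2)

end
end

section
/- Let f(u,t)=c(u)+A(u,t)v₂(u)+B(u,t)v₃(u), where (e,n,b) is the Frenet frame of the arc-length parametrized curve c with curvature κ>0 and torsion τ, v₂=cosθ·n−sinθ·b, v₃=sinθ·n+cosθ·b for a C^r function θ(u), and (A(u,t),B(u,t))=∫₀ᵗ v(cos λ(u,v), sin λ(u,v))dv with λ(u,t)=∫₀ᵗ μ̂(u,v)dv for a C^r function μ̂. Then the coefficients of the first fundamental form ds²_f=E du²+2F du dt+G dt² of f are E=(1−(A cosθ+B sinθ)κ)²+(A_u+(θ'−τ)B)²+(B_u−(θ'−τ)A)², F=A_t(A_u+(θ'−τ)B)+B_t(B_u−(θ'−τ)A), and G=t². -/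
noncomputable section

open Real Set Filter Topology MeasureTheory Asymptotics

/-- The function `λ(u,t) = ∫₀ᵗ μ(u,v) dv` of the representation formula. -/
def lamInt (μ : ℝ × ℝ → ℝ) (u t : ℝ) : ℝ := ∫ v in (0:ℝ)..t, μ (u, v)

/-- `A(u,t) = ∫₀ᵗ v cos λ(u,v) dv`. -/
def AA (μ : ℝ × ℝ → ℝ) (p : ℝ × ℝ) : ℝ :=
  ∫ v in (0:ℝ)..p.2, v * Real.cos (lamInt μ p.1 v)

/-- `B(u,t) = ∫₀ᵗ v sin λ(u,v) dv`. -/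
def BB (μ : ℝ × ℝ → ℝ) (p : ℝ × ℝ) : ℝ :=
  ∫ v in (0:ℝ)..p.2, v * Real.sin (lamInt μ p.1 v)

/-- The generalized cuspidal edge associated with the fundamental data `(κ, τ, θ, μ)`
(the curve `c` carries the data `κ`, `τ`):
`f(u,t) = c(u) + A(u,t) (cos θ n - sin θ b) + B(u,t) (sin θ n + cos θ b)`. -/
def repF (c : ℝ → V3) (θ : ℝ → ℝ) (μ : ℝ × ℝ → ℝ) (p : ℝ × ℝ) : V3 :=
  c p.1 +
    AA μ p • (Real.cos (θ p.1) • pnorm3 c p.1 - Real.sin (θ p.1) • binorm3 c p.1) +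
    BB μ p • (Real.sin (θ p.1) • pnorm3 c p.1 + Real.cos (θ p.1) • binorm3 c p.1)

/-! ### Auxiliary lemmas for stmt_13 -/

namespace S13

lemma dot3_self_nonneg (x : V3) : 0 ≤ dot3 x x := by
  simp only [dot3, ← sq]; positivity

lemma dot3_comm (x y : V3) : dot3 x y = dot3 y x := by simp [dot3]; ring

lemma dot3_smul_right (a : ℝ) (x y : V3) : dot3 x (a • y) = a * dot3 x y := by
  simp [dot3]; ring

lemma dot3_smul_left (a : ℝ) (x y : V3) : dot3 (a • x) y = a * dot3 x y := by
  simp [dot3]; ring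

lemma hasDerivAt_dot3 {f g : ℝ → V3} {f' g' : V3} {x : ℝ}
    (hf : HasDerivAt f f' x) (hg : HasDerivAt g g' x) :
    HasDerivAt (fun y => dot3 (f y) (g y)) (dot3 f' (g x) + dot3 (f x) g') x := by
  have h := fun i => hasDerivAt_pi.1 hf i
  have k := fun i => hasDerivAt_pi.1 hg i
  have := (((h 0).mul (k 0)).add ((h 1).mul (k 1))).add ((h 2).mul (k 2))
  convert this using 1
  · rfl
  · rfl
  · rfl
  simp [dot3]; ring

lemma hasDerivAt_cross3 {f g : ℝ → V3} {f' g' : V3} {x : ℝ}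
    (hf : HasDerivAt f f' x) (hg : HasDerivAt g g' x) :
    HasDerivAt (fun y => cross3 (f y) (g y)) (cross3 f' (g x) + cross3 (f x) g') x := by
  have h := fun i => hasDerivAt_pi.1 hf i
  have k := fun i => hasDerivAt_pi.1 hg i
  rw [hasDerivAt_pi]
  intro i
  fin_cases i
  · have := ((h 1).mul (k 2)).sub ((h 2).mul (k 1))
    convert this using 1
    · rfl
    simp [cross3]; ring
  · have := ((h 2).mul (k 0)).sub ((h 0).mul (k 2))
    convert this using 1
    · rfl
    simp [cross3]; ring
  · have := ((h 0).mul (k 1)).sub ((h 1).mul (k 0))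
    convert this using 1
    · rfl
    simp [cross3]; ring

lemma dot3_cross_left (x y : V3) : dot3 x (cross3 x y) = 0 := by simp [dot3, cross3]; ring
lemma dot3_cross_right (x y : V3) : dot3 y (cross3 x y) = 0 := by simp [dot3, cross3]; ring

lemma dot3_cross_cross (x y : V3) :
    dot3 (cross3 x y) (cross3 x y) = dot3 x x * dot3 y y - (dot3 x y) ^ 2 := by
  simp [dot3, cross3]; ring

/-- general frame expansion identity (no orthonormality needed). -/
lemma expand_id (e n w : V3) :
    dot3 (cross3 e n) (cross3 e n) • w =
      (dot3 w e * dot3 n n - dot3 w n * dot3 n e) • e +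
      (dot3 w n * dot3 e e - dot3 w e * dot3 e n) • n +
      dot3 w (cross3 e n) • cross3 e n := by
  funext i
  fin_cases i <;> · simp [dot3, cross3]; ring

lemma bprime_id (e n : V3) (k τ : ℝ) (hee : dot3 e e = 1) (hen : dot3 e n = 0) :
    cross3 (k • n) n + cross3 e (-k • e + τ • cross3 e n) = -τ • n := by
  simp only [dot3] at hee hen
  funext i
  fin_cases i
  · simp [cross3]; linear_combination τ * e 0 * hen - τ * n 0 * hee
  · simp [cross3]; linear_combination τ * e 1 * hen - τ * n 1 * hee
  · simp [cross3]; linear_combination τ * e 2 * hen - τ * n 2 * hee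

lemma ortho_E (x y z : V3) (a b c : ℝ)
    (hxx : dot3 x x = 1) (hyy : dot3 y y = 1) (hzz : dot3 z z = 1)
    (hxy : dot3 x y = 0) (hxz : dot3 x z = 0) (hyz : dot3 y z = 0) :
    dot3 (a • x + b • y + c • z) (a • x + b • y + c • z) = a ^ 2 + b ^ 2 + c ^ 2 := by
  simp only [dot3, Pi.add_apply, Pi.smul_apply, smul_eq_mul] at *
  linear_combination a^2 * hxx + b^2 * hyy + c^2 * hzz + 2*a*b*hxy + 2*a*c*hxz + 2*b*c*hyz

lemma ortho_F (x y z : V3) (a b c d f : ℝ)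
    (hyy : dot3 y y = 1) (hzz : dot3 z z = 1)
    (hxy : dot3 x y = 0) (hxz : dot3 x z = 0) (hyz : dot3 y z = 0) :
    dot3 (a • x + b • y + c • z) (d • y + f • z) = b * d + c * f := by
  simp only [dot3, Pi.add_apply, Pi.smul_apply, smul_eq_mul] at *
  linear_combination a*d*hxy + a*f*hxz + b*d*hyy + (b*f + c*d)*hyz + c*f*hzz

lemma ortho_G (y z : V3) (d f : ℝ)
    (hyy : dot3 y y = 1) (hzz : dot3 z z = 1) (hyz : dot3 y z = 0) :
    dot3 (d • y + f • z) (d • y + f • z) = d ^ 2 + f ^ 2 := by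
  simp only [dot3, Pi.add_apply, Pi.smul_apply, smul_eq_mul] at *
  linear_combination d^2*hyy + f^2*hzz + 2*d*f*hyz

lemma rot_orth (n b : V3) (cs sn : ℝ)
    (hnn : dot3 n n = 1) (hbb : dot3 b b = 1) (hnb : dot3 n b = 0)
    (hcs : sn ^ 2 + cs ^ 2 = 1) :
    dot3 (cs • n - sn • b) (cs • n - sn • b) = 1 ∧
    dot3 (sn • n + cs • b) (sn • n + cs • b) = 1 ∧
    dot3 (cs • n - sn • b) (sn • n + cs • b) = 0 := by
  simp only [dot3, Pi.add_apply, Pi.sub_apply, Pi.smul_apply, smul_eq_mul] at *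
  refine ⟨?_, ?_, ?_⟩
  · linear_combination cs^2*hnn + sn^2*hbb - 2*cs*sn*hnb + hcs
  · linear_combination sn^2*hnn + cs^2*hbb + 2*sn*cs*hnb + hcs
  · linear_combination cs*sn*hnn - sn*cs*hbb + (cs^2 - sn^2)*hnb

lemma e_rot (e n b : V3) (cs sn : ℝ) (hen : dot3 e n = 0) (heb : dot3 e b = 0) :
    dot3 e (cs • n - sn • b) = 0 ∧ dot3 e (sn • n + cs • b) = 0 := by
  simp only [dot3, Pi.add_apply, Pi.sub_apply, Pi.smul_apply, smul_eq_mul] at *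
  constructor
  · linear_combination cs*hen - sn*heb
  · linear_combination sn*hen + cs*heb

section Parametric

variable {μ : ℝ × ℝ → ℝ}

lemma slice_cont (hμ : Continuous μ) (y : ℝ) : Continuous (fun w => μ (y, w)) :=
  hμ.comp (continuous_const.prodMk continuous_id)

lemma mu1_cont (hμ : ContDiff ℝ (⊤ : ℕ∞) μ) :
    Continuous (fun q : ℝ × ℝ => fderiv ℝ μ q (1, 0)) :=
  (hμ.continuous_fderiv (by simp)).clm_apply continuous_const

lemma slice_hasDerivAt (hμ : ContDiff ℝ (⊤ : ℕ∞) μ) (y w : ℝ) :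
    HasDerivAt (fun z => μ (z, w)) (fderiv ℝ μ (y, w) (1, 0)) y := by
  have hF : HasFDerivAt μ (fderiv ℝ μ (y, w)) (y, w) :=
    (hμ.differentiable (by simp) (y, w)).hasFDerivAt
  have inner : HasDerivAt (fun z : ℝ => (z, w)) ((1 : ℝ), (0 : ℝ)) y :=
    (hasDerivAt_id y).prodMk (hasDerivAt_const y w)
  exact hF.comp_hasDerivAt y inner

lemma abs_le_of_mem_uIoc {v t : ℝ} (h : v ∈ Set.uIoc (0:ℝ) t) : |v| ≤ |t| := by
  rw [Set.mem_uIoc] at h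
  rcases h with ⟨h1, h2⟩ | ⟨h1, h2⟩ <;> rw [abs_le] <;>
    constructor <;> linarith [le_abs_self t, neg_abs_le t]

lemma lamInt_hasDerivAt (hμ : ContDiff ℝ (⊤ : ℕ∞) μ) (x v : ℝ) :
    HasDerivAt (fun y => lamInt μ y v)
      (∫ w in (0:ℝ)..v, fderiv ℝ μ (x, w) (1, 0)) x := by
  set μ₁ : ℝ × ℝ → ℝ := fun q => fderiv ℝ μ q (1, 0) with hμ₁
  have hμ₁c : Continuous μ₁ := mu1_cont hμ
  have hμc : Continuous μ := hμ.continuous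
  obtain ⟨C, hC⟩ := ((isCompact_Icc (a := x - 1) (b := x + 1)).prod
    (isCompact_uIcc (a := (0:ℝ)) (b := v))).exists_bound_of_continuousOn hμ₁c.continuousOn
  have key := (intervalIntegral.hasDerivAt_integral_of_dominated_loc_of_deriv_le
    (F := fun y w => μ (y, w)) (F' := fun y w => μ₁ (y, w)) (x₀ := x)
    (a := 0) (b := v) (bound := fun _ => C) (s := Metric.ball x 1) (μ := MeasureTheory.volume)
    (Metric.ball_mem_nhds x one_pos)
    (Eventually.of_forall fun y => ((slice_cont hμc y).aestronglyMeasurable))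
    ((slice_cont hμc x).intervalIntegrable 0 v)
    ((slice_cont hμ₁c x).aestronglyMeasurable)
    ?_ (intervalIntegrable_const) ?_).2
  · exact key
  · refine ae_of_all _ fun w hw y hy => hC (y, w) ⟨?_, Set.uIoc_subset_uIcc hw⟩
    have : |y - x| < 1 := by simpa [Real.dist_eq] using hy
    rw [abs_lt] at this
    constructor <;> simp <;> linarith
  · exact ae_of_all _ fun w _ y _ => slice_hasDerivAt hμ y w

/-- derivative in the parameter of `x ↦ ∫₀ᵗ v h(λ(x,v)) dv`. -/
lemma param_hasDerivAt (hμ : ContDiff ℝ (⊤ : ℕ∞) μ) (h h' : ℝ → ℝ)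
    (hd : ∀ s, HasDerivAt h (h' s) s) (hb : ∀ s, |h' s| ≤ 1)
    (hcont : Continuous h) (hcont' : Continuous h') (u t : ℝ) :
    ∃ D, HasDerivAt (fun x => ∫ v in (0:ℝ)..t, v * h (lamInt μ x v)) D u := by
  set μ₁ : ℝ × ℝ → ℝ := fun q => fderiv ℝ μ q (1, 0) with hμ₁
  have hμ₁c : Continuous μ₁ := mu1_cont hμ
  have hμc : Continuous μ := hμ.continuous
  set L1 : ℝ → ℝ → ℝ := fun y v => ∫ w in (0:ℝ)..v, μ₁ (y, w) with hL1
  obtain ⟨C, hC⟩ := ((isCompact_Icc (a := u - 1) (b := u + 1)).prod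
    (isCompact_uIcc (a := (0:ℝ)) (b := t))).exists_bound_of_continuousOn hμ₁c.continuousOn
  set M := max C 0 with hM
  have hM0 : 0 ≤ M := le_max_right _ _
  have hL1cont : ∀ y, Continuous (fun v => L1 y v) := fun y =>
    intervalIntegral.continuous_primitive (fun a b => (slice_cont hμ₁c y).intervalIntegrable a b) 0
  have hLcont : ∀ y, Continuous (fun v => lamInt μ y v) := fun y =>
    intervalIntegral.continuous_primitive (fun a b => (slice_cont hμc y).intervalIntegrable a b) 0
  have hL1bound : ∀ y ∈ Metric.ball u 1, ∀ v' ∈ Set.uIoc (0:ℝ) t, |L1 y v'| ≤ M * |t| := by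
    intro y hy v' hv'
    have h1 : ∀ w ∈ Set.uIoc (0:ℝ) v', ‖μ₁ (y, w)‖ ≤ M := by
      intro w hw
      refine le_trans (hC (y, w) ⟨?_, ?_⟩) (le_max_left _ _)
      · have : |y - u| < 1 := by simpa [Real.dist_eq] using hy
        rw [abs_lt] at this
        constructor <;> simp <;> linarith
      · exact Set.uIcc_subset_uIcc Set.left_mem_uIcc
          (Set.uIoc_subset_uIcc hv') (Set.uIoc_subset_uIcc hw)
    calc |L1 y v'| ≤ M * |v' - 0| := intervalIntegral.norm_integral_le_of_norm_le_const h1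
    _ ≤ M * |t| := by
        rw [sub_zero]
        exact mul_le_mul_of_nonneg_left (abs_le_of_mem_uIoc hv') hM0
  have key := (intervalIntegral.hasDerivAt_integral_of_dominated_loc_of_deriv_le
    (F := fun y v => v * h (lamInt μ y v))
    (F' := fun y v => v * (h' (lamInt μ y v) * L1 y v)) (x₀ := u)
    (a := 0) (b := t) (bound := fun _ => |t| * (M * |t|)) (s := Metric.ball u 1)
    (μ := MeasureTheory.volume) (Metric.ball_mem_nhds u one_pos)
    (Eventually.of_forall fun y =>
      (continuous_id.mul (hcont.comp (hLcont y))).aestronglyMeasurable)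
    ((continuous_id.mul (hcont.comp (hLcont u))).intervalIntegrable 0 t)
    ((continuous_id.mul ((hcont'.comp (hLcont u)).mul (hL1cont u))).aestronglyMeasurable)
    ?_ (intervalIntegrable_const) ?_).2
  · exact ⟨_, key⟩
  · refine ae_of_all _ fun v' hv' y hy => ?_
    have e1 : |h' (lamInt μ y v')| * |L1 y v'| ≤ 1 * (M * |t|) :=
      mul_le_mul (hb _) (hL1bound y hy v' hv') (abs_nonneg _) zero_le_one
    have h2 : |v' * (h' (lamInt μ y v') * L1 y v')| ≤ |t| * (1 * (M * |t|)) := by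
      rw [abs_mul, abs_mul]
      exact mul_le_mul (abs_le_of_mem_uIoc hv') e1
        (mul_nonneg (abs_nonneg _) (abs_nonneg _)) (abs_nonneg t)
    rw [one_mul] at h2
    simpa [norm_eq_abs, abs_mul] using h2
  · refine ae_of_all _ fun v' _ y _ => ?_
    have hL : HasDerivAt (fun z => lamInt μ z v') (L1 y v') y := lamInt_hasDerivAt hμ y v'
    exact ((hd (lamInt μ y v')).comp y hL).const_mul v'

lemma pd2_primitive (g : ℝ → ℝ) (hg : Continuous g) (t : ℝ) :
    HasDerivAt (fun s => ∫ v in (0:ℝ)..s, g v) (g t) t :=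
  intervalIntegral.integral_hasDerivAt_right (hg.intervalIntegrable 0 t)
    (hg.stronglyMeasurableAtFilter volume (𝓝 t)) hg.continuousAt

end Parametric

/-- All the Frenet-frame facts needed at a point of the curve. -/
lemma frenet (l : ℝ) (hl : 0 < l) (c : ℝ → V3) (hc : ContDiff ℝ (⊤ : ℕ∞) c)
    (harc : ∀ x ∈ Icc (-l) l, dot3 (deriv c x) (deriv c x) = 1)
    (hκpos : ∀ x ∈ Icc (-l) l, 0 < curv3 c x)
    (u : ℝ) (hu : u ∈ Icc (-l) l) :
    dot3 (deriv c u) (deriv c u) = 1 ∧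
    dot3 (pnorm3 c u) (pnorm3 c u) = 1 ∧
    dot3 (binorm3 c u) (binorm3 c u) = 1 ∧
    dot3 (deriv c u) (pnorm3 c u) = 0 ∧
    dot3 (deriv c u) (binorm3 c u) = 0 ∧
    dot3 (pnorm3 c u) (binorm3 c u) = 0 ∧
    HasDerivAt (pnorm3 c)
      (-(curv3 c u) • deriv c u + tors3 c u • binorm3 c u) u ∧
    HasDerivAt (binorm3 c) (-(tors3 c u) • pnorm3 c u) u := by
  have hlt : -l < l := by linarith
  have hcc : ContDiff ℝ (⊤:ℕ∞) c := hc.of_le (by simp)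
  have h1 := contDiff_infty_iff_deriv.mp hcc
  have h2 := contDiff_infty_iff_deriv.mp h1.2
  have h3 := contDiff_infty_iff_deriv.mp h2.2
  have hdc : ∀ x, HasDerivAt c (deriv c x) x := fun x => (h1.1 x).hasDerivAt
  have hdc1 : ∀ x, HasDerivAt (deriv c) (deriv (deriv c) x) x := fun x => (h2.1 x).hasDerivAt
  have hdc2 : ∀ x, HasDerivAt (deriv (deriv c)) (deriv (deriv (deriv c)) x) x :=
    fun x => (h3.1 x).hasDerivAt
  have hQd : ∀ x, HasDerivAt (fun y => dot3 (deriv (deriv c) y) (deriv (deriv c) y))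
      (dot3 (deriv (deriv (deriv c)) x) (deriv (deriv c) x) +
        dot3 (deriv (deriv c) x) (deriv (deriv (deriv c)) x)) x :=
    fun x => hasDerivAt_dot3 (hdc2 x) (hdc2 x)
  have hκsq : ∀ x, curv3 c x ^ 2 = dot3 (deriv (deriv c) x) (deriv (deriv c) x) := by
    intro x; rw [curv3]; exact Real.sq_sqrt (dot3_self_nonneg _)
  have hκu : 0 < curv3 c u := hκpos u hu
  have hκne : curv3 c u ≠ 0 := ne_of_gt hκu
  have hQu : 0 < dot3 (deriv (deriv c) u) (deriv (deriv c) u) := by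
    rw [← hκsq u]; positivity
  have hc2cont : Continuous (deriv (deriv c)) := h2.2.continuous
  have hQcont : Continuous (fun x => dot3 (deriv (deriv c) x) (deriv (deriv c) x)) := by
    have hcomp : ∀ i : Fin 3, Continuous fun x => deriv (deriv c) x i :=
      fun i => (continuous_apply i).comp hc2cont
    exact (((hcomp 0).mul (hcomp 0)).add ((hcomp 1).mul (hcomp 1))).add ((hcomp 2).mul (hcomp 2))
  have hQev : ∀ᶠ x in 𝓝 u, 0 < dot3 (deriv (deriv c) x) (deriv (deriv c) x) :=
    hQcont.continuousAt.eventually (eventually_gt_nhds hQu)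
  -- derivative of curvature
  have hκder : HasDerivAt (curv3 c)
      ((1 / (2 * Real.sqrt (dot3 (deriv (deriv c) u) (deriv (deriv c) u)))) *
        (dot3 (deriv (deriv (deriv c)) u) (deriv (deriv c) u) +
          dot3 (deriv (deriv c) u) (deriv (deriv (deriv c)) u))) u := by
    have := (Real.hasDerivAt_sqrt (ne_of_gt hQu)).comp u (hQd u)
    exact this
  -- derivative of the principal normal
  obtain ⟨n', hnder⟩ : ∃ d, HasDerivAt (pnorm3 c) d u :=
    ⟨_, (hκder.inv hκne).smul (hdc2 u)⟩
  -- derivative of the binormal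
  have hbder : HasDerivAt (binorm3 c)
      (cross3 (deriv (deriv c) u) (pnorm3 c u) + cross3 (deriv c u) n') u :=
    hasDerivAt_cross3 (hdc1 u) hnder
  -- pointwise orthonormality
  have hen_all : ∀ x ∈ Icc (-l) l, dot3 (deriv c x) (deriv (deriv c) x) = 0 := by
    intro x hx
    have hg : HasDerivAt (fun y => dot3 (deriv c y) (deriv c y))
        (dot3 (deriv (deriv c) x) (deriv c x) + dot3 (deriv c x) (deriv (deriv c) x)) x :=
      hasDerivAt_dot3 (hdc1 x) (hdc1 x)
    have h0 : deriv (fun y => dot3 (deriv c y) (deriv c y)) x = 0 := by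
      rw [← hg.differentiableAt.derivWithin (uniqueDiffOn_Icc hlt x hx)]
      rw [derivWithin_congr (fun y hy => harc y hy) (harc x hx)]
      simp
    rw [hg.deriv] at h0
    have hcm := dot3_comm (deriv (deriv c) x) (deriv c x)
    linarith
  have hee : dot3 (deriv c u) (deriv c u) = 1 := harc u hu
  have henc2 : dot3 (deriv c u) (deriv (deriv c) u) = 0 := hen_all u hu
  have hen : dot3 (deriv c u) (pnorm3 c u) = 0 := by
    rw [pnorm3, dot3_smul_right, henc2, mul_zero]
  have hnn : dot3 (pnorm3 c u) (pnorm3 c u) = 1 := by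
    rw [pnorm3, dot3_smul_right, dot3_smul_left, ← hκsq u]
    field_simp
  have heb : dot3 (deriv c u) (binorm3 c u) = 0 := by
    rw [binorm3]; exact dot3_cross_left _ _
  have hnb : dot3 (pnorm3 c u) (binorm3 c u) = 0 := by
    rw [binorm3]; exact dot3_cross_right _ _
  have hbb : dot3 (binorm3 c u) (binorm3 c u) = 1 := by
    rw [binorm3, dot3_cross_cross, hee, hnn, hen]; ring
  have hc2u : deriv (deriv c) u = curv3 c u • pnorm3 c u := by
    rw [pnorm3, smul_smul, mul_inv_cancel₀ hκne, one_smul]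
  -- ⟨n', n⟩ = 0
  have hnn_ev : ∀ᶠ x in 𝓝 u, dot3 (pnorm3 c x) (pnorm3 c x) = 1 := by
    refine hQev.mono fun x hx => ?_
    have hκx : (0:ℝ) < curv3 c x := by rw [curv3]; exact Real.sqrt_pos.2 hx
    rw [pnorm3, dot3_smul_right, dot3_smul_left, ← hκsq x]
    field_simp
  have hn'n : dot3 n' (pnorm3 c u) = 0 := by
    have hgd : HasDerivAt (fun x => dot3 (pnorm3 c x) (pnorm3 c x))
        (dot3 n' (pnorm3 c u) + dot3 (pnorm3 c u) n') u := hasDerivAt_dot3 hnder hnder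
    have hgc : HasDerivAt (fun x => dot3 (pnorm3 c x) (pnorm3 c x)) 0 u :=
      (hasDerivAt_const u (1:ℝ)).congr_of_eventuallyEq hnn_ev
    have huniq := hgd.unique hgc
    have hcm := dot3_comm (pnorm3 c u) n'
    linarith
  -- ⟨n', e⟩ = -κ
  have hn'e : dot3 n' (deriv c u) = -(curv3 c u) := by
    have hgd : HasDerivAt (fun x => dot3 (pnorm3 c x) (deriv c x))
        (dot3 n' (deriv c u) + dot3 (pnorm3 c u) (deriv (deriv c) u)) u :=
      hasDerivAt_dot3 hnder (hdc1 u)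
    have hIcc0 : ∀ x ∈ Icc (-l) l, dot3 (pnorm3 c x) (deriv c x) = 0 := by
      intro x hx
      rw [pnorm3, dot3_smul_left, dot3_comm, hen_all x hx, mul_zero]
    have h0 : deriv (fun x => dot3 (pnorm3 c x) (deriv c x)) u = 0 := by
      rw [← hgd.differentiableAt.derivWithin (uniqueDiffOn_Icc hlt u hu)]
      rw [derivWithin_congr (fun y hy => hIcc0 y hy) (hIcc0 u hu)]
      simp
    rw [hgd.deriv] at h0
    rw [hc2u, dot3_smul_right, hnn, mul_one] at h0
    linarith
  -- ⟨n', b⟩ = τ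
  have hn'b : dot3 n' (binorm3 c u) = tors3 c u := by
    rw [tors3, hnder.deriv]
  -- Frenet for n
  have hF7 : n' = -(curv3 c u) • deriv c u + tors3 c u • binorm3 c u := by
    have key := expand_id (deriv c u) (pnorm3 c u) n'
    have hbdef : cross3 (deriv c u) (pnorm3 c u) = binorm3 c u := rfl
    rw [hbdef] at key
    rw [hbb, hn'e, hnn, hn'n, hee, hen, hn'b, one_smul] at key
    rw [dot3_comm (pnorm3 c u) (deriv c u), hen] at key
    rw [key]
    module
  -- Frenet for b
  have hF8 : HasDerivAt (binorm3 c) (-(tors3 c u) • pnorm3 c u) u := by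
    have := hbder
    rw [hc2u, hF7] at this
    have hval : cross3 (curv3 c u • pnorm3 c u) (pnorm3 c u) +
        cross3 (deriv c u)
          (-(curv3 c u) • deriv c u + tors3 c u • binorm3 c u) =
        -(tors3 c u) • pnorm3 c u := by
      have hbdef : binorm3 c u = cross3 (deriv c u) (pnorm3 c u) := rfl
      rw [hbdef]
      exact bprime_id (deriv c u) (pnorm3 c u) (curv3 c u) (tors3 c u) hee hen
    rwa [hval] at this
  exact ⟨hee, hnn, hbb, hen, heb, hnb, hF7 ▸ hnder, hF8⟩

end S13

/-- the coefficients of the first fundamental form of the surface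
given by the representation formula (Fukui). -/
theorem stmt_13 (l : ℝ) (hl : 0 < l) (c : ℝ → V3) (θ : ℝ → ℝ) (μ : ℝ × ℝ → ℝ)
    (hc : ContDiff ℝ (⊤ : ℕ∞) c)
    (harc : ∀ u ∈ Icc (-l) l, dot3 (deriv c u) (deriv c u) = 1)
    (hκpos : ∀ u ∈ Icc (-l) l, 0 < curv3 c u)
    (hθ : ContDiff ℝ (⊤ : ℕ∞) θ) (hμ : ContDiff ℝ (⊤ : ℕ∞) μ) :
    ∀ p : ℝ × ℝ, p.1 ∈ Icc (-l) l →
      Ecoef (repF c θ μ) p =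
          (1 - (AA μ p * Real.cos (θ p.1) + BB μ p * Real.sin (θ p.1)) * curv3 c p.1) ^ 2 +
            (pd1 (AA μ) p + (deriv θ p.1 - tors3 c p.1) * BB μ p) ^ 2 +
            (pd1 (BB μ) p - (deriv θ p.1 - tors3 c p.1) * AA μ p) ^ 2 ∧
      Fcoef (repF c θ μ) p =
          pd2 (AA μ) p * (pd1 (AA μ) p + (deriv θ p.1 - tors3 c p.1) * BB μ p) +
            pd2 (BB μ) p * (pd1 (BB μ) p - (deriv θ p.1 - tors3 c p.1) * AA μ p) ∧
      Gcoef (repF c θ μ) p = p.2 ^ 2 := by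
  rintro ⟨u, t⟩ hu
  have hu' : u ∈ Icc (-l) l := hu
  obtain ⟨hee, hnn, hbb, hen, heb, hnb, hnder, hbder⟩ :=
    S13.frenet l hl c hc harc hκpos u hu'
  have hθd : HasDerivAt θ (deriv θ u) u := ((hθ.differentiable (by simp)) u).hasDerivAt
  have hsc : Real.sin (θ u) ^ 2 + Real.cos (θ u) ^ 2 = 1 := Real.sin_sq_add_cos_sq (θ u)
  obtain ⟨hV22, hV33, hV23⟩ := S13.rot_orth (pnorm3 c u) (binorm3 c u)
    (Real.cos (θ u)) (Real.sin (θ u)) hnn hbb hnb hsc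
  obtain ⟨heV2, heV3⟩ := S13.e_rot (deriv c u) (pnorm3 c u) (binorm3 c u)
    (Real.cos (θ u)) (Real.sin (θ u)) hen heb
  -- t-derivatives of A and B
  have hμc : Continuous μ := hμ.continuous
  have hLc : Continuous (fun v => lamInt μ u v) :=
    intervalIntegral.continuous_primitive
      (fun a b => (S13.slice_cont hμc u).intervalIntegrable a b) 0
  have hAt : HasDerivAt (fun s => AA μ (u, s)) (t * Real.cos (lamInt μ u t)) t :=
    S13.pd2_primitive _ (continuous_id.mul (Real.continuous_cos.comp hLc)) t
  have hBt : HasDerivAt (fun s => BB μ (u, s)) (t * Real.sin (lamInt μ u t)) t :=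
    S13.pd2_primitive _ (continuous_id.mul (Real.continuous_sin.comp hLc)) t
  have hpd2A : pd2 (AA μ) (u, t) = t * Real.cos (lamInt μ u t) := hAt.deriv
  have hpd2B : pd2 (BB μ) (u, t) = t * Real.sin (lamInt μ u t) := hBt.deriv
  -- u-derivatives of A and B
  obtain ⟨dA, hdA⟩ : ∃ D, HasDerivAt (fun x => AA μ (x, t)) D u :=
    S13.param_hasDerivAt hμ Real.cos (fun s => -Real.sin s)
      (fun s => Real.hasDerivAt_cos s)
      (fun s => by rw [abs_neg]; exact Real.abs_sin_le_one s)
      Real.continuous_cos Real.continuous_sin.neg u t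
  obtain ⟨dB, hdB⟩ : ∃ D, HasDerivAt (fun x => BB μ (x, t)) D u :=
    S13.param_hasDerivAt hμ Real.sin Real.cos
      (fun s => Real.hasDerivAt_sin s) (fun s => Real.abs_cos_le_one s)
      Real.continuous_sin Real.continuous_cos u t
  have hpd1A : pd1 (AA μ) (u, t) = dA := hdA.deriv
  have hpd1B : pd1 (BB μ) (u, t) = dB := hdB.deriv
  -- t-derivative of f
  have hft : HasDerivAt (fun s => repF c θ μ (u, s))
      ((0 : V3) +
        (t * Real.cos (lamInt μ u t)) •
          (Real.cos (θ u) • pnorm3 c u - Real.sin (θ u) • binorm3 c u) +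
        (t * Real.sin (lamInt μ u t)) •
          (Real.sin (θ u) • pnorm3 c u + Real.cos (θ u) • binorm3 c u)) t :=
    ((hasDerivAt_const t (c u)).add
      (hAt.smul_const (Real.cos (θ u) • pnorm3 c u - Real.sin (θ u) • binorm3 c u))).add
      (hBt.smul_const (Real.sin (θ u) • pnorm3 c u + Real.cos (θ u) • binorm3 c u))
  have hpd2f : pd2 (repF c θ μ) (u, t) = (0 : V3) +
      (t * Real.cos (lamInt μ u t)) •
        (Real.cos (θ u) • pnorm3 c u - Real.sin (θ u) • binorm3 c u) +
      (t * Real.sin (lamInt μ u t)) •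
        (Real.sin (θ u) • pnorm3 c u + Real.cos (θ u) • binorm3 c u) := hft.deriv
  rw [zero_add] at hpd2f
  -- u-derivative of f
  have hdc : HasDerivAt c (deriv c u) u := by
    have h1 := contDiff_infty_iff_deriv.mp (hc.of_le (by simp) : ContDiff ℝ (⊤:ℕ∞) c)
    exact (h1.1 u).hasDerivAt
  have hcosd : HasDerivAt (fun x => Real.cos (θ x)) (-Real.sin (θ u) * deriv θ u) u := hθd.cos
  have hsind : HasDerivAt (fun x => Real.sin (θ x)) (Real.cos (θ u) * deriv θ u) u := hθd.sin
  have hV2d : HasDerivAt (fun x => Real.cos (θ x) • pnorm3 c x - Real.sin (θ x) • binorm3 c x)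
      ((Real.cos (θ u) • (-(curv3 c u) • deriv c u + tors3 c u • binorm3 c u) +
        (-Real.sin (θ u) * deriv θ u) • pnorm3 c u) -
       (Real.sin (θ u) • (-(tors3 c u) • pnorm3 c u) +
        (Real.cos (θ u) * deriv θ u) • binorm3 c u)) u :=
    (hcosd.smul hnder).sub (hsind.smul hbder)
  have hV3d : HasDerivAt (fun x => Real.sin (θ x) • pnorm3 c x + Real.cos (θ x) • binorm3 c x)
      ((Real.sin (θ u) • (-(curv3 c u) • deriv c u + tors3 c u • binorm3 c u) +
        (Real.cos (θ u) * deriv θ u) • pnorm3 c u) +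
       (Real.cos (θ u) • (-(tors3 c u) • pnorm3 c u) +
        (-Real.sin (θ u) * deriv θ u) • binorm3 c u)) u :=
    (hsind.smul hnder).add (hcosd.smul hbder)
  have hfu : HasDerivAt (fun x => repF c θ μ (x, t))
      (deriv c u +
        (AA μ (u, t) •
          ((Real.cos (θ u) • (-(curv3 c u) • deriv c u + tors3 c u • binorm3 c u) +
            (-Real.sin (θ u) * deriv θ u) • pnorm3 c u) -
           (Real.sin (θ u) • (-(tors3 c u) • pnorm3 c u) +
            (Real.cos (θ u) * deriv θ u) • binorm3 c u)) +
         dA • (Real.cos (θ u) • pnorm3 c u - Real.sin (θ u) • binorm3 c u)) +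
        (BB μ (u, t) •
          ((Real.sin (θ u) • (-(curv3 c u) • deriv c u + tors3 c u • binorm3 c u) +
            (Real.cos (θ u) * deriv θ u) • pnorm3 c u) +
           (Real.cos (θ u) • (-(tors3 c u) • pnorm3 c u) +
            (-Real.sin (θ u) * deriv θ u) • binorm3 c u)) +
         dB • (Real.sin (θ u) • pnorm3 c u + Real.cos (θ u) • binorm3 c u))) u :=
    (hdc.add (hdA.smul hV2d)).add (hdB.smul hV3d)
  have hpd1f : pd1 (repF c θ μ) (u, t) = _ := hfu.deriv
  have hcollect :
      (deriv c u +
        (AA μ (u, t) •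
          ((Real.cos (θ u) • (-(curv3 c u) • deriv c u + tors3 c u • binorm3 c u) +
            (-Real.sin (θ u) * deriv θ u) • pnorm3 c u) -
           (Real.sin (θ u) • (-(tors3 c u) • pnorm3 c u) +
            (Real.cos (θ u) * deriv θ u) • binorm3 c u)) +
         dA • (Real.cos (θ u) • pnorm3 c u - Real.sin (θ u) • binorm3 c u)) +
        (BB μ (u, t) •
          ((Real.sin (θ u) • (-(curv3 c u) • deriv c u + tors3 c u • binorm3 c u) +
            (Real.cos (θ u) * deriv θ u) • pnorm3 c u) +
           (Real.cos (θ u) • (-(tors3 c u) • pnorm3 c u) +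
            (-Real.sin (θ u) * deriv θ u) • binorm3 c u)) +
         dB • (Real.sin (θ u) • pnorm3 c u + Real.cos (θ u) • binorm3 c u))) =
      (1 - (AA μ (u, t) * Real.cos (θ u) + BB μ (u, t) * Real.sin (θ u)) * curv3 c u) •
          deriv c u +
        (dA + (deriv θ u - tors3 c u) * BB μ (u, t)) •
          (Real.cos (θ u) • pnorm3 c u - Real.sin (θ u) • binorm3 c u) +
        (dB - (deriv θ u - tors3 c u) * AA μ (u, t)) •
          (Real.sin (θ u) • pnorm3 c u + Real.cos (θ u) • binorm3 c u) := by
    module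
  rw [hcollect] at hpd1f
  refine ⟨?_, ?_, ?_⟩
  · show Ecoef (repF c θ μ) (u, t) = _
    rw [Ecoef, hpd1f,
      S13.ortho_E _ _ _ _ _ _ hee hV22 hV33 heV2 heV3 hV23]
    dsimp only
    rw [hpd1A, hpd1B]
  · show Fcoef (repF c θ μ) (u, t) = _
    rw [Fcoef, hpd1f, hpd2f,
      S13.ortho_F _ _ _ _ _ _ _ _ hV22 hV33 heV2 heV3 hV23]
    dsimp only
    rw [hpd1A, hpd1B, hpd2A, hpd2B]
    ring
  · show Gcoef (repF c θ μ) (u, t) = _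
    rw [Gcoef, hpd2f,
      S13.ortho_G _ _ _ _ hV22 hV33 hV23]
    dsimp only
    linear_combination (t:ℝ)^2 * Real.sin_sq_add_cos_sq (lamInt μ u t)

end
end
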